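/- arXiv:solv-int/9704010 — 3 statements merged into one kernel-verified Lean document; each statement's English description precedes it below -/
import Mathlib

section
/- For every k ≥ 0, the k-th Faà di Bruno iterate h^(k) has the form h^(k) = z^k + (terms of order z^{k-2} and lower); precisely: the coefficient of z^k in h^(k) equals 1, the coefficient of z^{k-1} in h^(k) equals 0, and the coefficient of z^m in h^(k) equals 0 for every m > k. -/
/-
We model the ring `R((z⁻¹))` of formal Laurent series in `z⁻¹` over `R`
(series `Σ_{n ≤ N} a_n zⁿ` with finitely many positive powers of `z`)
as `HahnSeries ℤ R`, with the convention that the index `n : ℤ` records the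
coefficient of `z^(-n)`; thus the coefficient of `zᵐ` in `f` is `f.coeff (-m)`,
and `z` itself is `HahnSeries.single (-1) 1`.
-/

/-- The coefficientwise extension of an additive map `d : R → R` to `R((z⁻¹))`. -/
noncomputable def coeffExt {R : Type*} [CommRing R] (d : R →+ R)
    (f : HahnSeries ℤ R) : HahnSeries ℤ R where
  coeff n := d (f.coeff n)
  isPWO_support' := f.isPWO_support'.mono (fun n hn => by
    simp only [Function.mem_support] at hn ⊢
    exact fun h => hn (by rw [h, map_zero]))

/-- The Faà di Bruno iterates `h^(0) = 1`, `h^(k+1) = d(h^(k)) + h * h^(k)` in `R((z⁻¹))`. -/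
noncomputable def fdb {R : Type*} [CommRing R] (d : R →+ R)
    (h : HahnSeries ℤ R) : ℕ → HahnSeries ℤ R
  | 0 => 1
  | k + 1 => coeffExt d (fdb d h k) + h * fdb d h k

/-
Write `h = z + h'` with `h'` of order `z⁻¹`. If `h^(k) = zᵏ + g` with `g = O(z^(k-2))`, then
`h^(k+1) - z^(k+1) = d(g) + z g + h' zᵏ + h' g`, because `d(zᵏ) = d(1) zᵏ = 0`; every term on the
right is `O(z^(k-1))`, so the shape `h^(k) = zᵏ + O(z^(k-2))` propagates by induction on `k`.
-/

open HahnSeries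

lemma map_one_eq_zero_of_leibniz {R : Type*} [Ring R] (d : R →+ R)
    (hd : ∀ a b : R, d (a * b) = a * d b + d a * b) : d 1 = 0 := by
  simpa using hd 1 1

section Order

variable {Γ R : Type*} [LinearOrder Γ]

lemma HahnSeries.le_orderTop_add [AddMonoid R] {x y : HahnSeries Γ R} {a : WithTop Γ}
    (hx : a ≤ x.orderTop) (hy : a ≤ y.orderTop) : a ≤ (x + y).orderTop :=
  (le_min hx hy).trans min_orderTop_le_orderTop_add

lemma HahnSeries.coe_add_le_orderTop_mul [AddCommMonoid Γ] [IsOrderedCancelAddMonoid Γ]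
    [NonUnitalNonAssocSemiring R] {x y : HahnSeries Γ R}
    {a b : Γ} (hx : (a : WithTop Γ) ≤ x.orderTop) (hy : (b : WithTop Γ) ≤ y.orderTop) :
    ((a + b : Γ) : WithTop Γ) ≤ (x * y).orderTop :=
  (WithTop.coe_add a b ▸ add_le_add hx hy).trans orderTop_add_le_mul

end Order

section CoeffExt

variable {R : Type*} [CommRing R] (d : R →+ R)

lemma coeffExt_add (f g : HahnSeries ℤ R) :
    coeffExt d (f + g) = coeffExt d f + coeffExt d g := by
  ext n
  exact map_add d _ _

lemma coeffExt_single (a : ℤ) (r : R) : coeffExt d (single a r) = single a (d r) := by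
  ext n
  change d ((single a r).coeff n) = _
  by_cases hn : n = a <;> simp [hn]

lemma orderTop_le_orderTop_coeffExt (f : HahnSeries ℤ R) :
    f.orderTop ≤ (coeffExt d f).orderTop :=
  le_orderTop_iff_forall.2 fun j hj ↦ by
    change d (f.coeff j) = 0
    rw [coeff_eq_zero_of_lt_orderTop hj, map_zero]

end CoeffExt

section LeadingForm

variable {R : Type*} [CommRing R]

lemma one_le_orderTop_sub_single_of_coeff {h : HahnSeries ℤ R} (hz : h.coeff (-1) = 1)
    (h0 : h.coeff 0 = 0) (hpos : ∀ m : ℤ, 2 ≤ m → h.coeff (-m) = 0) :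
    1 ≤ (h - single (-1) 1).orderTop := by
  refine le_orderTop_iff_forall.2 fun j hj ↦ ?_
  have hj : j < 1 := mod_cast hj
  rw [coeff_sub, coeff_single]
  rcases lt_trichotomy j (-1) with hlt | rfl | hgt
  · simpa [hlt.ne] using hpos (-j) (by omega)
  · simp [hz]
  · obtain rfl : j = 0 := by omega
    simp [h0]

/-- One Faà di Bruno step preserves the shape `f = zⁿ + O(z^(n-2))`. -/
lemma le_orderTop_coeffExt_add_mul_sub_single (d : R →+ R) (hd1 : d 1 = 0)
    {h f : HahnSeries ℤ R} {n : ℤ} (hh : 1 ≤ (h - single (-1) 1).orderTop)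
    (hf : ((2 - n : ℤ) : WithTop ℤ) ≤ (f - single (-n) 1).orderTop) :
    ((2 - (n + 1) : ℤ) : WithTop ℤ) ≤ (coeffExt d f + h * f - single (-(n + 1)) 1).orderTop := by
  set g := f - single (-n) 1
  set h' := h - single (-1) 1
  have hexpand : coeffExt d f + h * f - single (-(n + 1)) 1
      = coeffExt d g + single (-1) 1 * g + (h' * single (-n) 1 + h' * g) := by
    have hzn : single (-1) (1 : R) * single (-n) 1 = single (-(n + 1)) 1 := by
      rw [single_mul_single, mul_one, neg_add_rev, add_comm]
    rw [← add_sub_cancel (single (-n) 1) f, ← add_sub_cancel (single (-1) 1) h,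
      coeffExt_add, coeffExt_single, hd1, single_eq_zero, ← hzn]
    ring
  have hdg : ((2 - (n + 1) : ℤ) : WithTop ℤ) ≤ (coeffExt d g).orderTop :=
    le_trans (by exact_mod_cast (by omega : 2 - (n + 1) ≤ 2 - n)) <|
      hf.trans (orderTop_le_orderTop_coeffExt d g)
  have hzg : ((2 - (n + 1) : ℤ) : WithTop ℤ) ≤ (single (-1) 1 * g).orderTop := by
    convert coe_add_le_orderTop_mul orderTop_single_le hf using 2; ring
  have hh'z : ((2 - (n + 1) : ℤ) : WithTop ℤ) ≤ (h' * single (-n) 1).orderTop := by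
    convert coe_add_le_orderTop_mul (by exact_mod_cast hh) orderTop_single_le using 2; ring
  have hh'g : ((2 - (n + 1) : ℤ) : WithTop ℤ) ≤ (h' * g).orderTop :=
    le_trans (by exact_mod_cast (by omega : 2 - (n + 1) ≤ 1 + (2 - n)))
      (coe_add_le_orderTop_mul (by exact_mod_cast hh) hf)
  rw [hexpand]
  exact le_orderTop_add (le_orderTop_add hdg hzg) (le_orderTop_add hh'z hh'g)

lemma coeff_of_le_orderTop_sub_single {f : HahnSeries ℤ R} {k : ℤ}
    (hf : ((2 - k : ℤ) : WithTop ℤ) ≤ (f - single (-k) 1).orderTop) :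
    f.coeff (-k) = 1 ∧ f.coeff (-(k - 1)) = 0 ∧ ∀ m : ℤ, k < m → f.coeff (-m) = 0 := by
  have hcoeff : ∀ i : ℤ, i < 2 - k → f.coeff i = (single (-k) (1 : R)).coeff i := fun i hi ↦
    sub_eq_zero.1 (coeff_sub.symm.trans (le_orderTop_iff_forall.1 hf i (by exact_mod_cast hi)))
  refine ⟨?_, ?_, fun m hm ↦ ?_⟩
  · simp [hcoeff (-k) (by omega)]
  · rw [hcoeff _ (by omega), coeff_single_of_ne (by omega)]
  · rw [hcoeff _ (by omega), coeff_single_of_ne (by omega)]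

end LeadingForm

/-- Let `R` be a commutative ring with a derivation `d`, and let
`h = z + Σ_{l ≥ 1} h_l z^(-l)` in `R((z⁻¹))`.  For every `k ≥ 0`, the `k`-th
Faà di Bruno iterate `h^(k)` has the form `h^(k) = z^k + O(z^(k-2))`:
the coefficient of `z^k` equals `1`, the coefficient of `z^(k-1)` equals `0`,
and the coefficient of `z^m` equals `0` for every `m > k`. -/
theorem faa_di_bruno_leading_form
    {R : Type*} [CommRing R] (d : R →+ R)
    (hd : ∀ a b : R, d (a * b) = a * d b + d a * b)
    (h : HahnSeries ℤ R)
    (hz : h.coeff (-1) = 1)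
    (h0 : h.coeff 0 = 0)
    (hpos : ∀ m : ℤ, 2 ≤ m → h.coeff (-m) = 0)
    (k : ℕ) :
    (fdb d h k).coeff (-(k : ℤ)) = 1 ∧
    (fdb d h k).coeff (-((k : ℤ) - 1)) = 0 ∧
    ∀ m : ℤ, (k : ℤ) < m → (fdb d h k).coeff (-m) = 0 := by
  have hd1 := map_one_eq_zero_of_leibniz d hd
  have hh := one_le_orderTop_sub_single_of_coeff hz h0 hpos
  refine coeff_of_le_orderTop_sub_single ?_
  induction k with
  | zero => simp [fdb]
  | succ k ih =>
    push_cast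
    exact le_orderTop_coeffExt_add_mul_sub_single d hd1 hh ih
end

section
/- Suppose elements h_1, h_2, h_3, h_4, h_5, c_1, c_2, c_3 ∈ A satisfy: d(h_1) = −2h_2; d(h_2) = −2h_3 − h_1²; d(h_4) = −2h_5 − 2h_1h_3 − h_2²; h_3 = c_1 + h_1²; h_4 = c_2 + h_1h_2; h_5 = c_3 + h_1h_3; and d(c_2) = 0. Then h_2² = h_1³ + 2c_1·h_1 + 2c_3. -/
/-- Let `A` be a commutative ring and `d : A → A` a derivation. Suppose
`h1, h2, h3, h4, h5, c1, c2, c3 ∈ A` satisfy `d h1 = -2h2`, `d h2 = -2h3 - h1²`,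
`d h4 = -2h5 - 2h1h3 - h2²`, `h3 = c1 + h1²`, `h4 = c2 + h1h2`, `h5 = c3 + h1h3`,
and `d c2 = 0`. Then `h2² = h1³ + 2c1·h1 + 2c3`. -/
theorem h2_sq_eq
    {A : Type*} [CommRing A] (d : A →+ A)
    (hd : ∀ a b : A, d (a * b) = a * d b + d a * b)
    (h1 h2 h3 h4 h5 c1 c2 c3 : A)
    (e1 : d h1 = -2 * h2)
    (e2 : d h2 = -2 * h3 - h1 ^ 2)
    (e4 : d h4 = -2 * h5 - 2 * h1 * h3 - h2 ^ 2)
    (f3 : h3 = c1 + h1 ^ 2)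
    (f4 : h4 = c2 + h1 * h2)
    (f5 : h5 = c3 + h1 * h3)
    (hc2 : d c2 = 0) :
    h2 ^ 2 = h1 ^ 3 + 2 * c1 * h1 + 2 * c3 := by
  have key : d h4 = -2*h1*h3 - h1^3 - 2*h2^2 := by
    rw [f4, map_add, hc2, hd, e1, e2, f3]; ring
  linear_combination key - e4 + 2*f5 + 2*h1*f3
end

section
/- Suppose elements h_1, h_2, h_3, h_4, h_5, c_1, c_2, c_3 ∈ A satisfy: d(h_1) = −2h_2; d(h_2) = −2h_3 − h_1²; d(h_4) = −2h_5 − 2h_1h_3 − h_2²; h_3 = c_1 + h_1²; h_4 = c_2 + h_1h_2; h_5 = c_3 + h_1h_3; and d(c_2) = 0. Then (d(h_1))² = 4h_1³ + 8c_1·h_1 + 8c_3, i.e. h_1 satisfies the Weierstrass differential equation with g_2 = −8c_1 and g_3 = −8c_3. -/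
/-- Let `A` be a commutative ring and `d : A → A` a derivation. Suppose
`h1, h2, h3, h4, h5, c1, c2, c3 ∈ A` satisfy `d h1 = -2h2`, `d h2 = -2h3 - h1²`,
`d h4 = -2h5 - 2h1h3 - h2²`, `h3 = c1 + h1²`, `h4 = c2 + h1h2`, `h5 = c3 + h1h3`,
and `d c2 = 0`. Then `(d h1)² = 4h1³ + 8c1·h1 + 8c3`, i.e. `h1` satisfies the
Weierstrass differential equation with `g2 = -8c1` and `g3 = -8c3`. -/
theorem weierstrass_equation
    {A : Type*} [CommRing A] (d : A →+ A)
    (hd : ∀ a b : A, d (a * b) = a * d b + d a * b)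
    (h1 h2 h3 h4 h5 c1 c2 c3 : A)
    (e1 : d h1 = -2 * h2)
    (e2 : d h2 = -2 * h3 - h1 ^ 2)
    (e4 : d h4 = -2 * h5 - 2 * h1 * h3 - h2 ^ 2)
    (f3 : h3 = c1 + h1 ^ 2)
    (f4 : h4 = c2 + h1 * h2)
    (f5 : h5 = c3 + h1 * h3)
    (hc2 : d c2 = 0) :
    (d h1) ^ 2 = 4 * h1 ^ 3 + 8 * c1 * h1 + 8 * c3 := by
  have key := e4
  rw [f4, map_add, hd, hc2, e1, e2, f3, f5, f3] at key
  rw [e1]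
  linear_combination -4 * key
end
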